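/- The map p ↦ S p from ℝ into the 3×3 matrices over Λ is injective, satisfies S p * S q = S (p + q) and S 0 = 1; consequently the set {S p : p ∈ ℝ} is an abelian group under matrix multiplication, and p ↦ S p is a group isomorphism from the additive group (ℝ, +) onto it. -/
import Mathlib

noncomputable section

abbrev Λ : Type := ExteriorAlgebra ℂ (Fin 2 → ℂ)

def η : Λ := ExteriorAlgebra.ι ℂ (Pi.single 0 1)

def η' : Λ := ExteriorAlgebra.ι ℂ (Pi.single 1 1)

def E : Λ := η * η'

def S (p : ℝ) : Matrix (Fin 3) (Fin 3) Λ :=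
  !![1 + ((p ^ 2 / 2 : ℝ) : ℂ) • E, 0, -((p : ℂ) • η');
     0, 1 + ((p ^ 2 / 2 : ℝ) : ℂ) • E, -((p : ℂ) • η);
     (p : ℂ) • η, -((p : ℂ) • η'), 1 - ((p ^ 2 : ℝ) : ℂ) • E]

lemma ηη : η * η = 0 := ExteriorAlgebra.ι_sq_zero _
lemma η'η' : η' * η' = 0 := ExteriorAlgebra.ι_sq_zero _
lemma η'η : η' * η = -(η * η') := by
  have := ExteriorAlgebra.ι_add_mul_swap (R := ℂ) (Pi.single 0 1 : Fin 2 → ℂ) (Pi.single 1 1)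
  rw [eq_neg_iff_add_eq_zero, add_comm]; exact this

lemma ηE : η * E = 0 := by rw [E, ← mul_assoc, ηη, zero_mul]
lemma Eη : E * η = 0 := by rw [E, mul_assoc, η'η, mul_neg, ← mul_assoc, ηη, zero_mul, neg_zero]
lemma η'E : η' * E = 0 := by rw [E, ← mul_assoc, η'η, neg_mul, mul_assoc, η'η', mul_zero, neg_zero]
lemma Eη' : E * η' = 0 := by rw [E, mul_assoc, η'η', mul_zero]
lemma EE : E * E = 0 := by rw [E, mul_assoc, ← mul_assoc η' η, η'η, neg_mul, mul_assoc, η'η', mul_zero, neg_zero, mul_zero]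

lemma S_mul (p q : ℝ) : S p * S q = S (p + q) := by
  have hE : η * η' = E := rfl
  ext i j
  fin_cases i <;> fin_cases j <;>
    simp only [S, Matrix.mul_fin_three, Matrix.cons_val', Matrix.cons_val_zero,
      Matrix.cons_val_one, Matrix.head_cons, Matrix.empty_val', Matrix.cons_val_fin_one,
      Matrix.of_apply, Matrix.head_fin_const, Matrix.cons_val_two, Matrix.tail_cons,
      Fin.mk_zero, Fin.mk_one, Fin.zero_eta, Fin.isValue, Fin.reduceFinMk, Matrix.vecHead, Matrix.vecTail,
      Function.comp_apply, Matrix.cons_val_succ, Fin.succ_zero_eq_one, Fin.succ_one_eq_two] <;>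
    simp only [mul_add, add_mul, mul_sub, sub_mul, mul_one, one_mul, mul_neg, neg_mul, neg_neg,
      mul_zero, zero_mul, smul_mul_smul_comm, mul_smul_comm, smul_mul_assoc,
      ηη, η'η', η'η, ηE, Eη, η'E, Eη', EE, hE,
      smul_zero, smul_neg, zero_add, add_zero, neg_zero, smul_smul, sub_zero] <;>
    push_cast <;>
    module

lemma S_zero : S 0 = 1 := by
  ext i j
  fin_cases i <;> fin_cases j <;>
    simp only [S, Matrix.cons_val', Matrix.cons_val_zero, Matrix.cons_val_one, Matrix.head_cons,
      Matrix.empty_val', Matrix.cons_val_fin_one, Matrix.of_apply, Matrix.head_fin_const,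
      Matrix.cons_val_two, Matrix.tail_cons, Fin.mk_zero, Fin.mk_one, Fin.zero_eta, Fin.isValue,
      Fin.reduceFinMk, Matrix.one_apply_eq, Matrix.one_apply_ne, ne_eq, Fin.reduceEq,
      not_false_eq_true] <;>
    push_cast <;>
    simp

def φ0 : Multiplicative ℝ →* Matrix (Fin 3) (Fin 3) Λ where
  toFun x := S (Multiplicative.toAdd x)
  map_one' := S_zero
  map_mul' _ _ := (S_mul _ _).symm

lemma S_inj : Function.Injective S := by
  intro p q h
  have h20 : S p 2 0 = S q 2 0 := by rw [h]
  simp only [S, Matrix.cons_val', Matrix.cons_val_zero, Matrix.empty_val',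
    Matrix.cons_val_fin_one, Matrix.of_apply, Matrix.cons_val_two, Matrix.tail_cons,
    Matrix.head_cons] at h20
  have : ((p : ℂ) • (Pi.single 0 1 : Fin 2 → ℂ)) = (q : ℂ) • (Pi.single 0 1 : Fin 2 → ℂ) := by
    have := h20
    rw [η, ← map_smul, ← map_smul] at this
    exact (ExteriorAlgebra.ι_inj ℂ _ _).mp this
  have h0 := congrFun this 0
  simp [Pi.single_apply] at h0
  exact_mod_cast h0

theorem S_isomorphism_onto_abelian_group :
    Function.Injective S ∧
    (∀ p q : ℝ, S p * S q = S (p + q)) ∧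
    S 0 = 1 ∧
    -- the range of S is an abelian group under matrix multiplication:
    (∀ p q : ℝ, S p * S q = S q * S p) ∧
    (∀ p : ℝ, ∃ q : ℝ, S p * S q = 1 ∧ S q * S p = 1) ∧
    -- p ↦ S p is a group isomorphism from (ℝ, +) onto {S p : p ∈ ℝ}:
    (∃ φ : Multiplicative ℝ →* Matrix (Fin 3) (Fin 3) Λ,
      Function.Injective φ ∧ Set.range φ = Set.range S ∧
      ∀ p : ℝ, φ (Multiplicative.ofAdd p) = S p) := by
  refine ⟨S_inj, S_mul, S_zero, ?_, ?_, ?_⟩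
  · intro p q; rw [S_mul, S_mul, add_comm]
  · intro p
    exact ⟨-p, by rw [S_mul, add_neg_cancel, S_zero], by rw [S_mul, neg_add_cancel, S_zero]⟩
  · refine ⟨φ0, ?_, ?_, fun p => rfl⟩
    · intro x y h
      exact Multiplicative.toAdd.injective (S_inj h)
    · ext M
      constructor
      · rintro ⟨x, rfl⟩; exact ⟨Multiplicative.toAdd x, rfl⟩
      · rintro ⟨p, rfl⟩; exact ⟨Multiplicative.ofAdd p, rfl⟩
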